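/- Let X, U ∈ ℝ^{n×r} and let R be an orthogonal matrix (RᵀR = I_r) minimizing ‖U − XR‖_F. If ‖U − XR‖_{op} ≤ (1/4)σ_r(X), then ⟨(UUᵀ − XXᵀ)U, U − XR⟩ ≥ (1/20)·(‖UUᵀ − XXᵀ‖_F² + ‖(U − XR)Uᵀ‖_F²) + (σ_r(X)²/4)·‖U − XR‖_F² + (1/5)·‖UUᵀ − XXᵀ‖_F². -/

import Mathlib

open Matrix

noncomputable def vnorm {ι : Type*} [Fintype ι] (v : ι → ℝ) : ℝ :=
  Real.sqrt (∑ i, v i ^ 2)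

noncomputable def frob {α β : Type*} [Fintype α] [Fintype β] (M : Matrix α β ℝ) : ℝ :=
  Real.sqrt (∑ i, ∑ j, M i j ^ 2)

noncomputable def sval {α β : Type*} [Fintype α] [Fintype β] (M : Matrix α β ℝ) (k : ℕ) : ℝ :=
  sSup { t : ℝ | ∃ V : Submodule ℝ (β → ℝ), Module.finrank ℝ V = k ∧
    ∀ v ∈ V, t * vnorm v ≤ vnorm (M.mulVec v) }

noncomputable def opNorm {α β : Type*} [Fintype α] [Fintype β] (M : Matrix α β ℝ) : ℝ :=
  sval M 1

noncomputable def pdist {α ρ : Type*} [Fintype α] [Fintype ρ] [DecidableEq ρ]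
    (U X : Matrix α ρ ℝ) : ℝ :=
  sInf { d : ℝ | ∃ R : Matrix ρ ρ ℝ, Rᵀ * R = 1 ∧ d = frob (U - X * R) }

noncomputable def mip {α β : Type*} [Fintype α] [Fintype β] (A B : Matrix α β ℝ) : ℝ :=
  ∑ i, ∑ j, A i j * B i j

noncomputable def mapA {m : ℕ} {α β : Type*} [Fintype α] [Fintype β]
    (A : Fin m → Matrix α β ℝ) (Z : Matrix α β ℝ) : Fin m → ℝ :=
  fun k => mip (A k) Z

def HasRIP {m n₁ n₂ : ℕ} (A : Fin m → Matrix (Fin n₁) (Fin n₂) ℝ) (s : ℕ) (δ : ℝ) : Prop :=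
  ∀ Z : Matrix (Fin n₁) (Fin n₂) ℝ, Z.rank ≤ s →
    (1 - δ) * frob Z ^ 2 ≤ ∑ k, mapA A Z k ^ 2 ∧
      ∑ k, mapA A Z k ^ 2 ≤ (1 + δ) * frob Z ^ 2

noncomputable def gradU {m n₁ n₂ r : ℕ} (A : Fin m → Matrix (Fin n₁) (Fin n₂) ℝ)
    (M : Matrix (Fin n₁) (Fin n₂) ℝ)
    (U : Matrix (Fin n₁) (Fin r) ℝ) (V : Matrix (Fin n₂) (Fin r) ℝ) :
    Matrix (Fin n₁) (Fin r) ℝ :=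
  (∑ k, mip (A k) (U * Vᵀ - M) • (A k * V)) + (1 / 4 : ℝ) • (U * (Uᵀ * U - Vᵀ * V))

noncomputable def gradV {m n₁ n₂ r : ℕ} (A : Fin m → Matrix (Fin n₁) (Fin n₂) ℝ)
    (M : Matrix (Fin n₁) (Fin n₂) ℝ)
    (U : Matrix (Fin n₁) (Fin r) ℝ) (V : Matrix (Fin n₂) (Fin r) ℝ) :
    Matrix (Fin n₂) (Fin r) ℝ :=
  (∑ k, mip (A k) (U * Vᵀ - M) • ((A k)ᵀ * U)) + (1 / 4 : ℝ) • (V * (Vᵀ * V - Uᵀ * U))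

noncomputable def gradg {m n₁ n₂ r : ℕ} (A : Fin m → Matrix (Fin n₁) (Fin n₂) ℝ)
    (M : Matrix (Fin n₁) (Fin n₂) ℝ)
    (U : Matrix (Fin n₁) (Fin r) ℝ) (V : Matrix (Fin n₂) (Fin r) ℝ) :
    Matrix (Fin n₁ ⊕ Fin n₂) (Fin r) ℝ :=
  Matrix.fromRows (gradU A M U V) (gradV A M U V)


section Base
variable {α β γ : Type*} [Fintype α] [Fintype β] [Fintype γ]

lemma vnorm_nonneg (v : α → ℝ) : 0 ≤ vnorm v := Real.sqrt_nonneg _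

lemma vnorm_sq (v : α → ℝ) : vnorm v ^ 2 = ∑ i, v i ^ 2 :=
  Real.sq_sqrt (Finset.sum_nonneg fun _ _ => sq_nonneg _)

lemma vnorm_zero : vnorm (0 : α → ℝ) = 0 := by simp [vnorm]

lemma vnorm_pos {v : α → ℝ} (hv : v ≠ 0) : 0 < vnorm v := by
  have ⟨i, hi⟩ : ∃ i, v i ≠ 0 := Function.ne_iff.mp hv
  refine Real.sqrt_pos.2 (Finset.sum_pos' (fun _ _ => sq_nonneg _) ⟨i, Finset.mem_univ i, ?_⟩)
  positivity

lemma vnorm_smul (c : ℝ) (v : α → ℝ) : vnorm (c • v) = |c| * vnorm v := by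
  unfold vnorm
  rw [← Real.sqrt_sq_eq_abs, ← Real.sqrt_mul (sq_nonneg c), Finset.mul_sum]
  congr 1
  apply Finset.sum_congr rfl; intros; simp [mul_pow]

lemma le_of_sq_le_sq' {a b : ℝ} (ha : 0 ≤ a) (hb : 0 ≤ b) (h : a ^ 2 ≤ b ^ 2) : a ≤ b := by
  nlinarith

lemma frob_nonneg (M : Matrix α β ℝ) : 0 ≤ frob M := Real.sqrt_nonneg _

lemma frob_sq (M : Matrix α β ℝ) : frob M ^ 2 = mip M M := by
  unfold frob mip
  rw [Real.sq_sqrt (by positivity)]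
  congr 1; funext i; congr 1; funext j; ring

lemma mip_eq_trace (A B : Matrix α β ℝ) : mip A B = Matrix.trace (Aᵀ * B) := by
  unfold mip Matrix.trace
  simp only [Matrix.diag, Matrix.mul_apply, Matrix.transpose_apply]
  rw [Finset.sum_comm]

lemma mip_self_nonneg (A : Matrix α β ℝ) : 0 ≤ mip A A := by
  unfold mip
  exact Finset.sum_nonneg fun i _ => Finset.sum_nonneg fun j _ => mul_self_nonneg _

lemma mip_add_left (A B C : Matrix α β ℝ) : mip (A + B) C = mip A C + mip B C := by
  simp [mip, add_mul, Finset.sum_add_distrib]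

lemma mip_add_right (A B C : Matrix α β ℝ) : mip A (B + C) = mip A B + mip A C := by
  simp [mip, mul_add, Finset.sum_add_distrib]

lemma mip_smul_right (c : ℝ) (A B : Matrix α β ℝ) : mip A (c • B) = c * mip A B := by
  simp [mip, Finset.mul_sum]; congr 1; funext i; congr 1; funext j; ring

lemma mip_sub_right (A B C : Matrix α β ℝ) : mip A (B - C) = mip A B - mip A C := by
  simp [mip, mul_sub, Finset.sum_sub_distrib]

lemma frob_sub_sq (A B : Matrix α β ℝ) :
    frob (A - B) ^ 2 = frob A ^ 2 - 2 * mip A B + frob B ^ 2 := by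
  rw [frob_sq, frob_sq, frob_sq]
  unfold mip
  simp only [Matrix.sub_apply]
  have : ∀ i j, (A i j - B i j) * (A i j - B i j) =
      A i j * A i j - 2 * (A i j * B i j) + B i j * B i j := by intros; ring
  simp_rw [this, Finset.sum_add_distrib, Finset.sum_sub_distrib, ← Finset.mul_sum]

lemma vnorm_mulVec_le_frob (M : Matrix α β ℝ) (v : β → ℝ) :
    vnorm (M.mulVec v) ≤ frob M * vnorm v := by
  refine le_of_sq_le_sq' (vnorm_nonneg _) (mul_nonneg (frob_nonneg _) (vnorm_nonneg _)) ?_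
  rw [mul_pow, vnorm_sq, vnorm_sq]
  have hf : frob M ^ 2 = ∑ i, ∑ j, M i j ^ 2 := by
    unfold frob; exact Real.sq_sqrt (by positivity)
  rw [hf, Finset.sum_mul]
  refine Finset.sum_le_sum fun i _ => ?_
  have := Finset.sum_mul_sq_le_sq_mul_sq Finset.univ (fun j => M i j) v
  simpa [Matrix.mulVec, dotProduct] using this

end Base

section Sval
variable {α : Type*} [Fintype α] {r : ℕ}

lemma mulVec_le_opNorm (M : Matrix α (Fin r) ℝ) (v : Fin r → ℝ) :
    vnorm (M.mulVec v) ≤ opNorm M * vnorm v := by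
  have hbdd : BddAbove { t : ℝ | ∃ V : Submodule ℝ (Fin r → ℝ), Module.finrank ℝ V = 1 ∧
      ∀ w ∈ V, t * vnorm w ≤ vnorm (M.mulVec w) } := by
    refine ⟨frob M, ?_⟩
    rintro t ⟨V, hV, h⟩
    obtain ⟨w, hwV, hw0⟩ : ∃ w ∈ V, w ≠ 0 := by
      by_contra hc
      push_neg at hc
      have hbot : V = ⊥ := (Submodule.eq_bot_iff V).2 hc
      rw [hbot] at hV; simp at hV
    have h1 := h w hwV
    have h2 := vnorm_mulVec_le_frob M w
    have h3 := vnorm_pos hw0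
    nlinarith
  by_cases hv : v = 0
  · simp [hv, Matrix.mulVec_zero, vnorm_zero]
  · have hvpos := vnorm_pos hv
    have hmem : vnorm (M.mulVec v) / vnorm v ∈ { t : ℝ | ∃ V : Submodule ℝ (Fin r → ℝ),
        Module.finrank ℝ V = 1 ∧ ∀ w ∈ V, t * vnorm w ≤ vnorm (M.mulVec w) } := by
      refine ⟨ℝ ∙ v, finrank_span_singleton hv, ?_⟩
      intro w hw
      obtain ⟨c, rfl⟩ := Submodule.mem_span_singleton.1 hw
      rw [Matrix.mulVec_smul, vnorm_smul, vnorm_smul]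
      have : vnorm (M.mulVec v) / vnorm v * (|c| * vnorm v) = |c| * vnorm (M.mulVec v) := by
        field_simp
      rw [this]
    have hle : vnorm (M.mulVec v) / vnorm v ≤ opNorm M := le_csSup hbdd hmem
    calc vnorm (M.mulVec v) = vnorm (M.mulVec v) / vnorm v * vnorm v := by
          field_simp
      _ ≤ opNorm M * vnorm v := mul_le_mul_of_nonneg_right hle (vnorm_nonneg v)

lemma opNorm_nonneg (hr : 0 < r) (M : Matrix α (Fin r) ℝ) : 0 ≤ opNorm M := by
  have hbdd : BddAbove { t : ℝ | ∃ V : Submodule ℝ (Fin r → ℝ), Module.finrank ℝ V = 1 ∧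
      ∀ w ∈ V, t * vnorm w ≤ vnorm (M.mulVec w) } := by
    refine ⟨frob M, ?_⟩
    rintro t ⟨V, hV, h⟩
    obtain ⟨w, hwV, hw0⟩ : ∃ w ∈ V, w ≠ 0 := by
      by_contra hc
      push_neg at hc
      have hbot : V = ⊥ := (Submodule.eq_bot_iff V).2 hc
      rw [hbot] at hV; simp at hV
    have h1 := h w hwV
    have h2 := vnorm_mulVec_le_frob M w
    have h3 := vnorm_pos hw0
    nlinarith
  have hone : (fun _ => (1:ℝ) : Fin r → ℝ) ≠ 0 := by
    intro hc
    have := congrFun hc (⟨0, hr⟩ : Fin r)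
    simp at this
  refine le_csSup hbdd ⟨ℝ ∙ (fun _ => (1:ℝ)), finrank_span_singleton hone, ?_⟩
  intro w _
  have := vnorm_nonneg (M.mulVec w)
  simp only [zero_mul]
  exact this

lemma sval_top_mem (X : Matrix α (Fin r) ℝ) :
    (0:ℝ) ∈ { t : ℝ | ∃ V : Submodule ℝ (Fin r → ℝ), Module.finrank ℝ V = r ∧
      ∀ v ∈ V, t * vnorm v ≤ vnorm (X.mulVec v) } := by
  refine ⟨⊤, ?_, ?_⟩
  · rw [finrank_top]; exact Module.finrank_fin_fun ℝ
  · intro v _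
    simpa using vnorm_nonneg (X.mulVec v)

lemma sval_mulVec (X : Matrix α (Fin r) ℝ) (v : Fin r → ℝ) :
    sval X r * vnorm v ≤ vnorm (X.mulVec v) := by
  by_cases hv : v = 0
  · simp [hv, Matrix.mulVec_zero, vnorm_zero]
  · have hvpos := vnorm_pos hv
    have hS : sval X r ≤ vnorm (X.mulVec v) / vnorm v := by
      refine csSup_le ⟨0, sval_top_mem X⟩ ?_
      rintro t ⟨V, hV, h⟩
      have hVtop : V = ⊤ := Submodule.eq_top_of_finrank_eq (by
        rw [hV, Module.finrank_fin_fun])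
      have := h v (hVtop ▸ Submodule.mem_top)
      rw [le_div_iff₀ hvpos]
      exact this
    calc sval X r * vnorm v ≤ vnorm (X.mulVec v) / vnorm v * vnorm v :=
          mul_le_mul_of_nonneg_right hS (vnorm_nonneg v)
      _ = vnorm (X.mulVec v) := div_mul_cancel₀ _ (ne_of_gt hvpos)

lemma sval_nonneg (X : Matrix α (Fin r) ℝ) (hr : 0 < r) : 0 ≤ sval X r := by
  have hone : (fun _ => (1:ℝ) : Fin r → ℝ) ≠ 0 := by
    intro hc
    have := congrFun hc (⟨0, hr⟩ : Fin r)
    simp at this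
  have hbdd : BddAbove { t : ℝ | ∃ V : Submodule ℝ (Fin r → ℝ), Module.finrank ℝ V = r ∧
      ∀ v ∈ V, t * vnorm v ≤ vnorm (X.mulVec v) } := by
    refine ⟨frob X, ?_⟩
    rintro t ⟨V, hV, h⟩
    have hVtop : V = ⊤ := Submodule.eq_top_of_finrank_eq (by
      rw [hV, Module.finrank_fin_fun])
    have h1 := h _ (hVtop ▸ Submodule.mem_top (x := (fun _ => (1:ℝ) : Fin r → ℝ)))
    have h2 := vnorm_mulVec_le_frob X (fun _ => (1:ℝ))
    have h3 := vnorm_pos hone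
    nlinarith
  exact le_csSup hbdd (sval_top_mem X)

end Sval

section Givens
variable {r : ℕ}

lemma stdBasis_transpose (a b : Fin r) :
    (Matrix.single a b (1:ℝ))ᵀ = Matrix.single b a 1 := by
  ext x y
  simp [Matrix.single, and_comm]

lemma mip_stdBasis (C : Matrix (Fin r) (Fin r) ℝ) (a b : Fin r) :
    mip C (Matrix.single a b 1) = C a b := by
  unfold mip
  simp [Matrix.single, Finset.sum_ite_eq, ite_and]

lemma sym_of_rot (C : Matrix (Fin r) (Fin r) ℝ)
    (h : ∀ Q : Matrix (Fin r) (Fin r) ℝ, Qᵀ * Q = 1 → mip C Q ≤ mip C 1) :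
    Cᵀ = C := by
  ext i j
  show C j i = C i j
  rcases eq_or_ne i j with rfl | hij
  · rfl
  have main : ∀ c s : ℝ, c ^ 2 + s ^ 2 = 1 →
      (c - 1) * (C i i + C j j) + s * (C j i - C i j) ≤ 0 := by
    intro c s hcs
    set A := Matrix.single i i (1:ℝ) + Matrix.single j j (1:ℝ) with hA
    set K := Matrix.single j i (1:ℝ) - Matrix.single i j (1:ℝ) with hK
    have hAA : A * A = A := by
      rw [hA]
      simp [add_mul, mul_add, hij, hij.symm]
    have hAK : A * K = K := by
      rw [hA, hK]
      simp [add_mul, mul_add, mul_sub, sub_mul, hij, hij.symm]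
    have hKA : K * A = K := by
      rw [hA, hK]
      simp [add_mul, mul_add, mul_sub, sub_mul, hij, hij.symm]
      abel
    have hKK : K * K = -A := by
      rw [hA, hK]
      simp [mul_sub, sub_mul, hij, hij.symm]
      abel
    have hAT : Aᵀ = A := by rw [hA]; simp [Matrix.transpose_add, stdBasis_transpose]
    have hKT : Kᵀ = -K := by rw [hK]; simp [Matrix.transpose_sub, stdBasis_transpose]
    set Q := 1 + (c - 1) • A + s • K with hQ
    have hQT : Qᵀ = 1 + (c - 1) • A - s • K := by
      rw [hQ]
      simp [Matrix.transpose_add, Matrix.transpose_smul, hAT, hKT, sub_eq_add_neg]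
    have hQorth : Qᵀ * Q = 1 := by
      calc Qᵀ * Q = (1 + (c - 1) • A - s • K) * (1 + (c - 1) • A + s • K) := by
            rw [hQT]
        _ = 1 + ((c - 1) * (c - 1) + (c - 1) + (c - 1) + s * s) • A := by
            simp only [add_mul, mul_add, sub_mul, mul_sub, one_mul, mul_one,
              smul_mul_assoc, mul_smul_comm, hAA, hAK, hKA, hKK]
            module
        _ = 1 := by
            have hz : (c - 1) * (c - 1) + (c - 1) + (c - 1) + s * s = 0 := by nlinarith
            rw [hz, zero_smul, add_zero]
    have hQval : mip C Q = mip C 1 + ((c - 1) * (C i i + C j j) + s * (C j i - C i j)) := by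
      rw [hQ, mip_add_right, mip_add_right, mip_smul_right, mip_smul_right, hA, hK,
        mip_add_right, mip_sub_right, mip_stdBasis, mip_stdBasis, mip_stdBasis, mip_stdBasis]
      ring
    have := h Q hQorth
    rw [hQval] at this
    linarith
  set p := C i i + C j j with hp
  set q := C j i - C i j with hq
  by_cases hzero : p ^ 2 + q ^ 2 = 0
  · have : q = 0 := by nlinarith [sq_nonneg p, sq_nonneg q]
    rw [hq] at this; linarith
  · have hpos : 0 < p ^ 2 + q ^ 2 :=
      lt_of_le_of_ne (by positivity) (Ne.symm hzero)
    set ρ := Real.sqrt (p ^ 2 + q ^ 2) with hρ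
    have ρpos : 0 < ρ := Real.sqrt_pos.2 hpos
    have ρsq : ρ ^ 2 = p ^ 2 + q ^ 2 := Real.sq_sqrt hpos.le
    have hunit : (p / ρ) ^ 2 + (q / ρ) ^ 2 = 1 := by
      field_simp
      linarith [ρsq]
    have h1 := main (p / ρ) (q / ρ) hunit
    have h3 : ((p / ρ - 1) * p + q / ρ * q) * ρ = p ^ 2 + q ^ 2 - p * ρ := by
      field_simp; ring
    have h2 : p ^ 2 + q ^ 2 - p * ρ ≤ 0 := by
      rw [← h3]
      exact mul_nonpos_of_nonpos_of_nonneg h1 ρpos.le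
    have hρp : ρ ≤ p := by nlinarith [ρsq, ρpos]
    have hqz : q = 0 := by nlinarith [ρsq, ρpos]
    rw [hq] at hqz; linarith
end Givens

section Ident
variable {α β : Type*} [Fintype α] [Fintype β]

lemma mip_mul_right_move {γ : Type*} [Fintype γ] (E : Matrix α γ ℝ) (U : Matrix γ β ℝ)
    (Δ : Matrix α β ℝ) : mip (E * U) Δ = mip E (Δ * Uᵀ) := by
  rw [mip_eq_trace, mip_eq_trace, Matrix.transpose_mul]
  rw [Matrix.mul_assoc, Matrix.trace_mul_comm, Matrix.mul_assoc]

lemma mip_move_left {γ : Type*} [Fintype γ] (A : Matrix α β ℝ) (B : Matrix α γ ℝ)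
    (Q : Matrix γ β ℝ) : mip A (B * Q) = mip (Bᵀ * A) Q := by
  rw [mip_eq_trace, mip_eq_trace, Matrix.transpose_mul, Matrix.transpose_transpose,
    Matrix.mul_assoc]

lemma mip_one_right [DecidableEq α] (A : Matrix α α ℝ) : mip A 1 = Matrix.trace A := by
  rw [mip_eq_trace, Matrix.mul_one, Matrix.trace_transpose]

variable (Y Δ : Matrix α β ℝ)

lemma e1 : mip (Δ * Yᵀ) (Δ * Yᵀ) = mip (Y * Δᵀ) (Y * Δᵀ) := by
  rw [mip_eq_trace, mip_eq_trace]
  simp only [Matrix.transpose_mul, Matrix.transpose_transpose, Matrix.mul_assoc]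
  rw [Matrix.trace_mul_comm]
  simp only [Matrix.mul_assoc]
  rw [Matrix.trace_mul_comm]
  simp only [Matrix.mul_assoc]

lemma e3 : mip (Δ * Yᵀ) (Δ * Δᵀ) = mip (Yᵀ * Δ) (Δᵀ * Δ) := by
  rw [mip_eq_trace, mip_eq_trace]
  simp only [Matrix.transpose_mul, Matrix.transpose_transpose, Matrix.mul_assoc]
  rw [Matrix.trace_mul_comm]
  simp only [Matrix.mul_assoc]
  rw [Matrix.trace_mul_comm]
  simp only [Matrix.mul_assoc]
  rw [Matrix.trace_mul_comm]
  simp only [Matrix.mul_assoc]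

lemma e7 : mip (Δ * Δᵀ) (Y * Δᵀ) = mip (Yᵀ * Δ) (Δᵀ * Δ) := by
  rw [mip_eq_trace, mip_eq_trace]
  simp only [Matrix.transpose_mul, Matrix.transpose_transpose, Matrix.mul_assoc]
  rw [Matrix.trace_mul_comm]
  simp only [Matrix.mul_assoc]

lemma e10 : mip (Δᵀ * Δ) (Δᵀ * Δ) = mip (Δ * Δᵀ) (Δ * Δᵀ) := by
  rw [mip_eq_trace, mip_eq_trace]
  simp only [Matrix.transpose_mul, Matrix.transpose_transpose, Matrix.mul_assoc]
  rw [Matrix.trace_mul_comm]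
  simp only [Matrix.mul_assoc]

variable (hP : Δᵀ * Y = Yᵀ * Δ)
include hP

lemma e2 : mip (Δ * Yᵀ) (Y * Δᵀ) = mip (Yᵀ * Δ) (Yᵀ * Δ) := by
  rw [mip_eq_trace, mip_eq_trace]
  simp only [Matrix.transpose_mul, Matrix.transpose_transpose, Matrix.mul_assoc]
  rw [Matrix.trace_mul_comm]
  simp only [Matrix.mul_assoc]
  rw [hP]

lemma e4 : mip (Y * Δᵀ) (Δ * Yᵀ) = mip (Yᵀ * Δ) (Yᵀ * Δ) := by
  rw [mip_eq_trace, mip_eq_trace]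
  simp only [Matrix.transpose_mul, Matrix.transpose_transpose, Matrix.mul_assoc]
  rw [Matrix.trace_mul_comm]
  simp only [Matrix.mul_assoc]
  rw [← Matrix.mul_assoc Δᵀ Y, hP]
  simp only [Matrix.mul_assoc]

lemma e5 : mip (Y * Δᵀ) (Δ * Δᵀ) = mip (Yᵀ * Δ) (Δᵀ * Δ) := by
  rw [mip_eq_trace, mip_eq_trace]
  simp only [Matrix.transpose_mul, Matrix.transpose_transpose, Matrix.mul_assoc]
  rw [← Matrix.mul_assoc Yᵀ Δ Δᵀ, ← hP]
  simp only [Matrix.mul_assoc]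
  rw [Matrix.trace_mul_comm]
  simp only [Matrix.mul_assoc]

lemma e6 : mip (Δ * Δᵀ) (Δ * Yᵀ) = mip (Yᵀ * Δ) (Δᵀ * Δ) := by
  rw [mip_eq_trace, mip_eq_trace]
  simp only [Matrix.transpose_mul, Matrix.transpose_transpose, Matrix.mul_assoc]
  rw [Matrix.trace_mul_comm]
  simp only [Matrix.mul_assoc]
  rw [← hP]
  rw [Matrix.trace_mul_comm]
  simp only [Matrix.mul_assoc]
  rw [Matrix.trace_mul_comm]
  simp only [Matrix.mul_assoc]

end Ident

section Cols
variable {α β : Type*} [Fintype α] [Fintype β] {r : ℕ}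

lemma mip_cauchy (A B : Matrix α β ℝ) : mip A B ^ 2 ≤ mip A A * mip B B := by
  unfold mip
  rw [← Finset.sum_product' (f := fun i j => A i j * B i j),
    ← Finset.sum_product' (f := fun i j => A i j * A i j),
    ← Finset.sum_product' (f := fun i j => B i j * B i j)]
  have := Finset.sum_mul_sq_le_sq_mul_sq (Finset.univ ×ˢ Finset.univ)
    (fun p : α × β => A p.1 p.2) (fun p : α × β => B p.1 p.2)
  calc (∑ p ∈ Finset.univ ×ˢ Finset.univ, A p.1 p.2 * B p.1 p.2) ^ 2
      ≤ (∑ p ∈ Finset.univ ×ˢ Finset.univ, A p.1 p.2 ^ 2) *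
        ∑ p ∈ Finset.univ ×ˢ Finset.univ, B p.1 p.2 ^ 2 := this
    _ = _ := by
        congr 1 <;> [skip; skip] <;> apply Finset.sum_congr rfl <;> intros <;> ring

lemma mip_mul_transpose_eq (Y : Matrix α (Fin r) ℝ) (Δ : Matrix β (Fin r) ℝ) :
    mip (Y * Δᵀ) (Y * Δᵀ) = ∑ j : β, vnorm (Y.mulVec (Δ j)) ^ 2 := by
  unfold mip
  rw [Finset.sum_comm]
  apply Finset.sum_congr rfl; intro j _
  rw [vnorm_sq]
  apply Finset.sum_congr rfl; intro i _
  have h : (Y * Δᵀ) i j = Y.mulVec (Δ j) i := by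
    simp [Matrix.mul_apply, Matrix.mulVec, dotProduct]
  rw [h]; ring

lemma frob_sq_rows (Δ : Matrix β (Fin r) ℝ) : frob Δ ^ 2 = ∑ j : β, vnorm (Δ j) ^ 2 := by
  rw [frob_sq]
  unfold mip
  apply Finset.sum_congr rfl; intro j _
  rw [vnorm_sq]
  apply Finset.sum_congr rfl; intros; ring

lemma vnorm_mulVec_orth (R : Matrix (Fin r) (Fin r) ℝ) (hR : Rᵀ * R = 1) (v : Fin r → ℝ) :
    vnorm (R.mulVec v) = vnorm v := by
  unfold vnorm
  congr 1
  have hdp : ∀ w : Fin r → ℝ, ∑ i, w i ^ 2 = w ⬝ᵥ w := by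
    intro w; simp [dotProduct, sq]
  rw [hdp, hdp, Matrix.dotProduct_mulVec, ← Matrix.mulVec_transpose,
    Matrix.mulVec_mulVec, hR, Matrix.one_mulVec]

lemma frob_mul_orth (X : Matrix α (Fin r) ℝ) (R' : Matrix (Fin r) (Fin r) ℝ)
    (h : R'ᵀ * R' = 1) : frob (X * R') ^ 2 = Matrix.trace (Xᵀ * X) := by
  rw [frob_sq, mip_eq_trace, Matrix.transpose_mul]
  simp only [Matrix.mul_assoc]
  rw [Matrix.trace_mul_comm]
  simp only [Matrix.mul_assoc]
  rw [mul_eq_one_comm.mp h, Matrix.mul_one]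

end Cols

set_option maxHeartbeats 1000000 in
/-- Regularity condition for the reference function F(U) = ¼‖UUᵀ−XXᵀ‖_F². -/
theorem regularity_condition_reference_function {n r : ℕ}
    (X U : Matrix (Fin n) (Fin r) ℝ)
    (R : Matrix (Fin r) (Fin r) ℝ) (hR : Rᵀ * R = 1)
    (hRmin : ∀ R' : Matrix (Fin r) (Fin r) ℝ, R'ᵀ * R' = 1 →
      frob (U - X * R) ≤ frob (U - X * R'))
    (hop : opNorm (U - X * R) ≤ (1 / 4) * sval X r) :
    mip ((U * Uᵀ - X * Xᵀ) * U) (U - X * R) ≥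
      (1 / 20) * (frob (U * Uᵀ - X * Xᵀ) ^ 2 + frob ((U - X * R) * Uᵀ) ^ 2) +
        (sval X r ^ 2 / 4) * frob (U - X * R) ^ 2 +
        (1 / 5) * frob (U * Uᵀ - X * Xᵀ) ^ 2 := by
  rcases Nat.eq_zero_or_pos r with hr | hr
  · subst hr
    have hUU : U * Uᵀ - X * Xᵀ = 0 := by
      ext i j
      simp [Matrix.mul_apply]
    have hf0 : frob (U - X * R) = 0 := by simp [frob]
    have hDU0 : frob ((U - X * R) * Uᵀ) = 0 := by simp [frob, Matrix.mul_apply]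
    have hm0 : mip ((U * Uᵀ - X * Xᵀ) * U) (U - X * R) = 0 := by simp [mip]
    have hfz : frob (0 : Matrix (Fin n) (Fin n) ℝ) = 0 := by simp [frob]
    rw [hm0, hUU, hf0, hDU0, hfz]
    norm_num
  · have hRR : R * Rᵀ = 1 := mul_eq_one_comm.mp hR
    set σ := sval X r with hσdef
    have hσ : 0 ≤ σ := sval_nonneg X hr
    set Y := X * R with hYdef
    set Δ := U - Y with hΔdef
    have hXX : X * Xᵀ = Y * Yᵀ := by
      rw [hYdef, Matrix.transpose_mul, Matrix.mul_assoc, ← Matrix.mul_assoc R Rᵀ Xᵀ, hRR,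
        Matrix.one_mul]
    have hUeq : U = Y + Δ := by rw [hΔdef]; abel
    -- Procrustes optimality gives symmetry of Yᵀ U
    have hkey : ∀ Q : Matrix (Fin r) (Fin r) ℝ, Qᵀ * Q = 1 →
        mip (Yᵀ * U) Q ≤ mip (Yᵀ * U) 1 := by
      intro Q hQ
      have horth : (R * Q)ᵀ * (R * Q) = 1 := by
        rw [Matrix.transpose_mul, Matrix.mul_assoc, ← Matrix.mul_assoc Rᵀ R Q, hR,
          Matrix.one_mul, hQ]
      have hmin := hRmin (R * Q) horth
      have hminsq : frob (U - Y) ^ 2 ≤ frob (U - X * (R * Q)) ^ 2 :=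
        pow_le_pow_left₀ (frob_nonneg _) hmin 2
      rw [frob_sub_sq, frob_sub_sq] at hminsq
      have h1 : frob Y ^ 2 = Matrix.trace (Xᵀ * X) := by
        rw [hYdef]; exact frob_mul_orth X R hR
      have h2 : frob (X * (R * Q)) ^ 2 = Matrix.trace (Xᵀ * X) := frob_mul_orth X (R * Q) horth
      have h3 : mip U (X * (R * Q)) ≤ mip U Y := by linarith
      have h4 : X * (R * Q) = Y * Q := by rw [hYdef, Matrix.mul_assoc]
      rw [h4, mip_move_left] at h3
      have h5 : mip U Y = mip (Yᵀ * U) 1 := by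
        rw [mip_one_right, mip_eq_trace, ← Matrix.trace_transpose (Uᵀ * Y),
          Matrix.transpose_mul, Matrix.transpose_transpose]
      rw [h5] at h3
      exact h3
    have hCsym : (Yᵀ * U)ᵀ = Yᵀ * U := sym_of_rot _ hkey
    have hUY : Uᵀ * Y = Yᵀ * U := by
      rw [Matrix.transpose_mul, Matrix.transpose_transpose] at hCsym
      exact hCsym
    have hP : Δᵀ * Y = Yᵀ * Δ := by
      rw [hΔdef, Matrix.transpose_sub, Matrix.sub_mul, Matrix.mul_sub, hUY]
    -- matrix decompositions
    have hE : U * Uᵀ - X * Xᵀ = Δ * Yᵀ + (Y * Δᵀ + Δ * Δᵀ) := by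
      rw [hXX, hUeq, Matrix.transpose_add, Matrix.add_mul, Matrix.mul_add, Matrix.mul_add]
      abel
    have hDU : Δ * Uᵀ = Δ * Yᵀ + Δ * Δᵀ := by
      rw [hUeq, Matrix.transpose_add, Matrix.mul_add]
    -- the three identities
    have I1 : mip ((U * Uᵀ - X * Xᵀ) * U) Δ =
        mip (Y * Δᵀ) (Y * Δᵀ) + mip (Yᵀ * Δ) (Yᵀ * Δ) + 3 * mip (Yᵀ * Δ) (Δᵀ * Δ) +
          mip (Δ * Δᵀ) (Δ * Δᵀ) := by
      rw [mip_mul_right_move, hE, hDU]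
      simp only [mip_add_left, mip_add_right]
      rw [e1, e4 Y Δ hP, e6 Y Δ hP, e3, e5 Y Δ hP]
      ring
    have I2 : frob (U * Uᵀ - X * Xᵀ) ^ 2 =
        2 * mip (Y * Δᵀ) (Y * Δᵀ) + 2 * mip (Yᵀ * Δ) (Yᵀ * Δ) +
          4 * mip (Yᵀ * Δ) (Δᵀ * Δ) + mip (Δ * Δᵀ) (Δ * Δᵀ) := by
      rw [frob_sq, hE]
      simp only [mip_add_left, mip_add_right]
      rw [e1, e2 Y Δ hP, e3, e4 Y Δ hP, e5 Y Δ hP, e6 Y Δ hP, e7]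
      ring
    have I3 : frob (Δ * Uᵀ) ^ 2 =
        mip (Y * Δᵀ) (Y * Δᵀ) + 2 * mip (Yᵀ * Δ) (Δᵀ * Δ) + mip (Δ * Δᵀ) (Δ * Δᵀ) := by
      rw [frob_sq, hDU]
      simp only [mip_add_left, mip_add_right]
      rw [e1, e3, e6 Y Δ hP]
      ring
    -- constraints
    have hTge : σ ^ 2 * frob Δ ^ 2 ≤ mip (Y * Δᵀ) (Y * Δᵀ) := by
      rw [mip_mul_transpose_eq Y Δ, frob_sq_rows Δ, Finset.mul_sum]
      apply Finset.sum_le_sum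
      intro j _
      have h1 : σ * vnorm (Δ j) ≤ vnorm (Y.mulVec (Δ j)) := by
        rw [hYdef, ← Matrix.mulVec_mulVec]
        calc σ * vnorm (Δ j) = σ * vnorm (R.mulVec (Δ j)) := by
              rw [vnorm_mulVec_orth R hR]
          _ ≤ vnorm (X.mulVec (R.mulVec (Δ j))) := sval_mulVec X _
      calc σ ^ 2 * vnorm (Δ j) ^ 2 = (σ * vnorm (Δ j)) ^ 2 := by ring
        _ ≤ vnorm (Y.mulVec (Δ j)) ^ 2 :=
            pow_le_pow_left₀ (mul_nonneg hσ (vnorm_nonneg _)) h1 2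
    have hD2le : mip (Δ * Δᵀ) (Δ * Δᵀ) ≤ (1 / 4 * σ) ^ 2 * frob Δ ^ 2 := by
      rw [mip_mul_transpose_eq Δ Δ, frob_sq_rows Δ, Finset.mul_sum]
      apply Finset.sum_le_sum
      intro j _
      have h1 : vnorm (Δ.mulVec (Δ j)) ≤ 1 / 4 * σ * vnorm (Δ j) :=
        le_trans (mulVec_le_opNorm Δ (Δ j))
          (mul_le_mul_of_nonneg_right hop (vnorm_nonneg _))
      calc vnorm (Δ.mulVec (Δ j)) ^ 2 ≤ (1 / 4 * σ * vnorm (Δ j)) ^ 2 :=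
            pow_le_pow_left₀ (vnorm_nonneg _) h1 2
        _ = (1 / 4 * σ) ^ 2 * vnorm (Δ j) ^ 2 := by ring
    have hP2n : 0 ≤ mip (Yᵀ * Δ) (Yᵀ * Δ) := mip_self_nonneg _
    have hD2n : 0 ≤ mip (Δ * Δᵀ) (Δ * Δᵀ) := mip_self_nonneg _
    have hCS : mip (Yᵀ * Δ) (Δᵀ * Δ) ^ 2 ≤
        mip (Yᵀ * Δ) (Yᵀ * Δ) * mip (Δ * Δᵀ) (Δ * Δᵀ) := by
      have h := mip_cauchy (Yᵀ * Δ) (Δᵀ * Δ)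
      rw [e10] at h
      exact h
    rw [ge_iff_le, I1, I2, I3]
    set T := mip (Y * Δᵀ) (Y * Δᵀ) with hTdef
    set P2 := mip (Yᵀ * Δ) (Yᵀ * Δ) with hP2def
    set cc := mip (Yᵀ * Δ) (Δᵀ * Δ) with hccdef
    set D2 := mip (Δ * Δᵀ) (Δ * Δᵀ) with hD2def
    set τ := frob Δ ^ 2 with hτdef
    have hτn : (0:ℝ) ≤ τ := by rw [hτdef]; positivity
    set p := Real.sqrt P2 with hpdef
    set d := Real.sqrt D2 with hddef
    have hsp : p ^ 2 = P2 := Real.sq_sqrt hP2n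
    have hsd : d ^ 2 = D2 := Real.sq_sqrt hD2n
    have hpn : 0 ≤ p := Real.sqrt_nonneg _
    have hdn : 0 ≤ d := Real.sqrt_nonneg _
    clear_value T P2 cc D2 τ p d σ
    have hccge : -(p * d) ≤ cc := by
      nlinarith [hCS, hsp, hsd, sq_nonneg (cc + p * d), mul_nonneg hpn hdn]
    nlinarith [hTge, hD2le, hccge, hsp, hsd, hτn, hσ,
      sq_nonneg (p - (19 / 10) * d),
      mul_nonneg (mul_nonneg hσ hσ) hτn]
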